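/- For density matrices ρ and σ with supp(ρ) ⊆ supp(σ) on a finite-dimensional Hilbert space, -2 log₂ F(ρ,σ) ≤ D(ρ‖σ), where F is the fidelity and D(ρ‖σ) = tr(ρ(log₂ ρ - log₂ σ)) is the quantum relative entropy. -/

import Mathlib

open Matrix
open scoped ComplexOrder

/-- Base-2 matrix logarithm of a Hermitian matrix, defined through its spectral
decomposition. -/
noncomputable def matLog2 {n : Type*} [Fintype n] [DecidableEq n]
    {A : Matrix n n ℂ} (hA : A.IsHermitian) : Matrix n n ℂ :=
  (hA.eigenvectorUnitary : Matrix n n ℂ) *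
    Matrix.diagonal (fun i => (Real.logb 2 (hA.eigenvalues i) : ℂ)) *
    star (hA.eigenvectorUnitary : Matrix n n ℂ)

/-- The positive semidefinite square root of a positive semidefinite matrix
(the definition `Matrix.PosSemidef.sqrt` of the older Mathlib, since removed). -/
noncomputable def Matrix.PosSemidef.sqrt {n : Type*} {𝕜 : Type*} [Fintype n] [RCLike 𝕜]
    [DecidableEq n] {A : Matrix n n 𝕜} (hA : A.PosSemidef) : Matrix n n 𝕜 :=
  hA.1.eigenvectorUnitary.1 * diagonal ((↑) ∘ (√·) ∘ hA.1.eigenvalues) *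
  (star hA.1.eigenvectorUnitary : Matrix n n 𝕜)

/-!
Write `ρ = ∑ᵢ pᵢ |uᵢ⟩⟨uᵢ|`, `σ = ∑ⱼ qⱼ |vⱼ⟩⟨vⱼ|` and `Oᵢⱼ = |⟨uᵢ, vⱼ⟩|²`, a doubly stochastic
matrix. The Nussbaum–Szkoła distributions `P(i, j) = pᵢ Oᵢⱼ` and `Q(i, j) = qⱼ Oᵢⱼ` satisfy
`D(ρ‖σ) = D(P‖Q)` and `tr (√ρ √σ) = ∑ √(P Q)`, and `supp ρ ⊆ supp σ` becomes `supp P ⊆ supp Q`.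
Classically, `-2 log ∑ √(P Q) ≤ D(P‖Q)` is Jensen's inequality for the concave `log` at the points
`√(Q / P)` with weights `P`. Finally `Re tr (√ρ √σ) ≤ ‖√ρ √σ‖₁ = tr √(√σ ρ √σ) = F(ρ, σ)`.
-/

section Classical

open Real

variable {ι : Type*} [Fintype ι] {P Q : ι → ℝ}

lemma mul_mul_logb_mul_sub_logb_mul {b p q o : ℝ} (hpq : q * o = 0 → p * o = 0) :
    p * o * (logb b (p * o) - logb b (q * o)) = p * o * (logb b p - logb b q) := by
  by_cases h : p * o = 0
  · rw [h, zero_mul, zero_mul]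
  have hq : q * o ≠ 0 := mt hpq h
  rw [logb_mul (left_ne_zero_of_mul h) (right_ne_zero_of_mul h),
    logb_mul (left_ne_zero_of_mul hq) (right_ne_zero_of_mul hq)]
  ring

lemma sum_sqrt_mul_pos (hP : ∀ x, 0 ≤ P x) (hP1 : ∑ x, P x = 1) (hQ : ∀ x, 0 ≤ Q x)
    (hPQ : ∀ x, Q x = 0 → P x = 0) : 0 < ∑ x, √(P x * Q x) := by
  obtain ⟨x, -, hx⟩ := Finset.exists_ne_zero_of_sum_ne_zero (hP1 ▸ one_ne_zero)
  refine Finset.sum_pos' (fun y _ => sqrt_nonneg _) ⟨x, Finset.mem_univ x, ?_⟩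
  exact sqrt_pos.2 (mul_pos ((hP x).lt_of_ne' hx) ((hQ x).lt_of_ne' (mt (hPQ x) hx)))

lemma neg_two_mul_log_sum_sqrt_mul_le (hP : ∀ x, 0 ≤ P x) (hP1 : ∑ x, P x = 1)
    (hQ : ∀ x, 0 ≤ Q x) (hPQ : ∀ x, Q x = 0 → P x = 0) :
    -2 * log (∑ x, √(P x * Q x)) ≤ ∑ x, P x * (log (P x) - log (Q x)) := by
  classical
  set s := Finset.univ.filter fun x => P x ≠ 0
  have hs : ∀ x ∈ s, 0 < P x ∧ 0 < Q x := fun x hx => by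
    have hx := (Finset.mem_filter.mp hx).2
    exact ⟨(hP x).lt_of_ne' hx, (hQ x).lt_of_ne' (mt (hPQ x) hx)⟩
  have sum_s : ∀ f : ι → ℝ, (∀ x, P x = 0 → f x = 0) → ∑ x ∈ s, f x = ∑ x, f x :=
    fun f hf => Finset.sum_filter_of_ne fun x _ => mt (hf x)
  have jensen := strictConcaveOn_log_Ioi.concaveOn.le_map_sum (t := s) (w := P)
    (p := fun x => √(Q x / P x)) (fun x _ => hP x) (by rw [sum_s P fun _ h => h, hP1])
    (fun x hx => sqrt_pos.2 (div_pos (hs x hx).2 (hs x hx).1))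
  have hlhs : ∑ x ∈ s, P x • log √(Q x / P x) =
      -(1 / 2) * ∑ x, P x * (log (P x) - log (Q x)) := by
    rw [Finset.mul_sum, ← sum_s _ fun x hx => by simp [hx]]
    refine Finset.sum_congr rfl fun x hx => ?_
    rw [smul_eq_mul, log_sqrt (div_nonneg (hQ x) (hP x)),
      log_div (hs x hx).2.ne' (hs x hx).1.ne']
    ring
  have hrhs : ∑ x ∈ s, P x • √(Q x / P x) = ∑ x, √(P x * Q x) := by
    rw [← sum_s _ fun x hx => by simp [hx]]
    refine Finset.sum_congr rfl fun x hx => ?_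
    rw [smul_eq_mul, ← sqrt_mul_self (hP x), ← sqrt_mul (mul_self_nonneg _),
      sqrt_mul_self (hP x)]
    congr 1
    field_simp [(hs x hx).1.ne']
  rw [hlhs, hrhs] at jensen
  linarith

lemma neg_two_mul_logb_sum_sqrt_mul_le {b : ℝ} (hb : 1 < b) (hP : ∀ x, 0 ≤ P x)
    (hP1 : ∑ x, P x = 1) (hQ : ∀ x, 0 ≤ Q x) (hPQ : ∀ x, Q x = 0 → P x = 0) :
    -2 * logb b (∑ x, √(P x * Q x)) ≤ ∑ x, P x * (logb b (P x) - logb b (Q x)) := by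
  simp only [logb, ← sub_div, ← mul_div_assoc, ← Finset.sum_div]
  exact div_le_div_of_nonneg_right (neg_two_mul_log_sum_sqrt_mul_le hP hP1 hQ hPQ)
    (log_pos hb).le

end Classical

namespace Matrix

section

variable {n : Type*} [Fintype n]

lemma normSq_apply_self_le_re_star_mul_self_apply (C : Matrix n n ℂ) (k : n) :
    Complex.normSq (C k k) ≤ ((star C * C) k k).re := by
  have h : ((star C * C) k k).re = ∑ i, Complex.normSq (C i k) := by
    simp only [mul_apply, star_apply, RCLike.star_def, Complex.re_sum, Complex.conj_mul',
      ← Complex.ofReal_pow, Complex.ofReal_re, Complex.sq_norm]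
  rw [h]
  exact Finset.single_le_sum (f := fun i => Complex.normSq (C i k))
    (fun i _ => Complex.normSq_nonneg _) (Finset.mem_univ k)

end

variable {n : Type*} [Fintype n] [DecidableEq n]

lemma trace_conj_diagonal_mul_conj_diagonal (U V : Matrix n n ℂ) (d e : n → ℂ) :
    (U * diagonal d * star U * (V * diagonal e * star V)).trace =
      ∑ i, ∑ j, d i * e j * (Complex.normSq ((star U * V) i j) : ℂ) := by
  set W := star U * V
  have hcycle : (U * diagonal d * star U * (V * diagonal e * star V)).trace =
      (diagonal d * W * diagonal e * star W).trace := by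
    rw [star_mul, star_star, show U * diagonal d * star U * (V * diagonal e * star V) =
      U * (diagonal d * W * diagonal e * star V) by simp only [W, Matrix.mul_assoc],
      trace_mul_comm]
    simp only [W, Matrix.mul_assoc]
  rw [hcycle]
  simp only [trace, diag_apply, mul_apply, diagonal_apply, star_apply, ite_mul, zero_mul,
    Finset.sum_ite_eq, Finset.mem_univ, if_true, mul_ite, mul_zero, RCLike.star_def,
    Finset.sum_ite_eq', ← Complex.mul_conj]
  refine Finset.sum_congr rfl fun i _ => Finset.sum_congr rfl fun j _ => ?_
  ring

lemma sum_normSq_apply_eq_one_of_mem_unitaryGroup {W : Matrix n n ℂ}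
    (hW : W ∈ unitaryGroup n ℂ) (i : n) : ∑ j, Complex.normSq (W i j) = 1 := by
  have h := congrFun (congrFun (mem_unitaryGroup_iff.mp hW) i) i
  simp only [mul_apply, star_apply, RCLike.star_def, Complex.mul_conj, one_apply_eq] at h
  exact_mod_cast h

section Sqrt

variable {𝕜 : Type*} [RCLike 𝕜] {A : Matrix n n 𝕜}

lemma IsHermitian.cfc_id (hA : A.IsHermitian) : hA.cfc id = A :=
  hA.spectral_theorem.symm

lemma PosSemidef.sqrt_eq_cfc (hA : A.PosSemidef) : hA.sqrt = cfc Real.sqrt A :=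
  (hA.1.cfc_eq _).symm

lemma PosSemidef.isHermitian_sqrt (hA : A.PosSemidef) : hA.sqrt.IsHermitian := by
  rw [hA.sqrt_eq_cfc]
  exact cfc_predicate _ _

lemma PosSemidef.sqrt_mul_sqrt (hA : A.PosSemidef) : hA.sqrt * hA.sqrt = A := by
  rw [hA.sqrt_eq_cfc, ← cfc_mul _ _ A]
  conv_rhs => rw [← cfc_id ℝ A hA.1]
  refine cfc_congr fun x hx => ?_
  rw [hA.1.spectrum_real_eq_range_eigenvalues] at hx
  obtain ⟨i, rfl⟩ := hx
  exact Real.mul_self_sqrt (hA.eigenvalues_nonneg i)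

end Sqrt

namespace IsHermitian

variable {A B : Matrix n n ℂ}

noncomputable def eigenOverlap (hA : A.IsHermitian) (hB : B.IsHermitian) (i j : n) : ℝ :=
  Complex.normSq ((star (hA.eigenvectorUnitary : Matrix n n ℂ) * hB.eigenvectorUnitary) i j)

lemma eigenOverlap_nonneg (hA : A.IsHermitian) (hB : B.IsHermitian) (i j : n) :
    0 ≤ hA.eigenOverlap hB i j :=
  Complex.normSq_nonneg _

lemma eigenOverlap_self (hA : A.IsHermitian) (i j : n) :
    hA.eigenOverlap hA i j = if i = j then 1 else 0 := by
  rw [eigenOverlap, Unitary.coe_star_mul_self, one_apply]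
  split_ifs <;> simp

lemma sum_eigenOverlap (hA : A.IsHermitian) (hB : B.IsHermitian) (i : n) :
    ∑ j, hA.eigenOverlap hB i j = 1 :=
  sum_normSq_apply_eq_one_of_mem_unitaryGroup
    (star hA.eigenvectorUnitary * hB.eigenvectorUnitary).2 i

lemma trace_cfc (hA : A.IsHermitian) (f : ℝ → ℝ) :
    (hA.cfc f).trace = ∑ i, (f (hA.eigenvalues i) : ℂ) := by
  rw [IsHermitian.cfc, Unitary.conjStarAlgAut_apply, trace_mul_cycle, Unitary.coe_star_mul_self,
    one_mul, trace_diagonal]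
  rfl

lemma trace_cfc_mul_cfc (hA : A.IsHermitian) (hB : B.IsHermitian) (f g : ℝ → ℝ) :
    (hA.cfc f * hB.cfc g).trace =
      ↑(∑ i, ∑ j, f (hA.eigenvalues i) * g (hB.eigenvalues j) * hA.eigenOverlap hB i j) := by
  rw [IsHermitian.cfc, IsHermitian.cfc, Unitary.conjStarAlgAut_apply, Unitary.conjStarAlgAut_apply,
    trace_conj_diagonal_mul_conj_diagonal]
  push_cast
  rfl

lemma eigenvalues_mul_eigenOverlap_eq_zero (hA : A.IsHermitian) (hB : B.IsHermitian)
    (hker : ∀ v, B *ᵥ v = 0 → A *ᵥ v = 0) {i j : n} (hj : hB.eigenvalues j = 0) :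
    hA.eigenvalues i * hA.eigenOverlap hB i j = 0 := by
  set U : Matrix n n ℂ := ↑hA.eigenvectorUnitary
  set v : n → ℂ := ⇑(hB.eigenvectorBasis j)
  have hv : A *ᵥ v = 0 := hker v (by rw [hB.mulVec_eigenvectorBasis, hj, zero_smul])
  have hdiag : star U * A = diagonal (RCLike.ofReal ∘ hA.eigenvalues) * star U := by
    rw [← hA.conjStarAlgAut_star_eigenvectorUnitary, Unitary.conjStarAlgAut_star_apply,
      Matrix.mul_assoc, Unitary.mul_star_self_of_mem hA.eigenvectorUnitary.2, Matrix.mul_one]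
  have h : (hA.eigenvalues i : ℂ) * (star U * hB.eigenvectorUnitary) i j = 0 := by
    have := congrFun (congrArg (· *ᵥ v) hdiag) i
    simp only [← mulVec_mulVec, hv, mulVec_zero, mulVec_diagonal, Function.comp_apply] at this
    exact this.symm
  rcases mul_eq_zero.mp h with h | h
  · simp [Complex.ofReal_eq_zero.mp h]
  · simp [eigenOverlap, U, h]

noncomputable def nussbaumSzkola (hA : A.IsHermitian) (hB : B.IsHermitian) :
    (n × n → ℝ) × (n × n → ℝ) :=
  (fun x => hA.eigenvalues x.1 * hA.eigenOverlap hB x.1 x.2,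
    fun x => hB.eigenvalues x.2 * hA.eigenOverlap hB x.1 x.2)

lemma sum_nussbaumSzkola_fst (hA : A.IsHermitian) (hB : B.IsHermitian) :
    ∑ x, (hA.nussbaumSzkola hB).1 x = A.trace.re := by
  rw [hA.trace_eq_sum_eigenvalues, Complex.re_sum, Fintype.sum_prod_type]
  refine Finset.sum_congr rfl fun i _ => ?_
  dsimp only [nussbaumSzkola]
  rw [← Finset.mul_sum, sum_eigenOverlap, mul_one]
  rfl

lemma nussbaumSzkola_fst_eq_zero (hA : A.IsHermitian) (hB : B.IsHermitian)
    (hker : ∀ v, B *ᵥ v = 0 → A *ᵥ v = 0) (x : n × n)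
    (hx : (hA.nussbaumSzkola hB).2 x = 0) : (hA.nussbaumSzkola hB).1 x = 0 := by
  rcases mul_eq_zero.mp hx with h | h
  · exact hA.eigenvalues_mul_eigenOverlap_eq_zero hB hker h
  · simp [nussbaumSzkola, h]

lemma re_trace_mul_sub_matLog2 (hA : A.IsHermitian) (hB : B.IsHermitian)
    (hker : ∀ v, B *ᵥ v = 0 → A *ᵥ v = 0) :
    (A * (matLog2 hA - matLog2 hB)).trace.re = ∑ x, (hA.nussbaumSzkola hB).1 x *
      (Real.logb 2 ((hA.nussbaumSzkola hB).1 x) - Real.logb 2 ((hA.nussbaumSzkola hB).2 x)) := by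
  have hcfc : A * (matLog2 hA - matLog2 hB) =
      hA.cfc id * hA.cfc (Real.logb 2) - hA.cfc id * hB.cfc (Real.logb 2) := by
    rw [hA.cfc_id, mul_sub]
    rfl
  rw [hcfc, trace_sub, trace_cfc_mul_cfc, trace_cfc_mul_cfc, ← Complex.ofReal_sub,
    Complex.ofReal_re, Fintype.sum_prod_type, ← Finset.sum_sub_distrib]
  refine Finset.sum_congr rfl fun i _ => ?_
  simp only [eigenOverlap_self, mul_ite, mul_one, mul_zero, Finset.sum_ite_eq, Finset.mem_univ,
    if_true, id]
  rw [← mul_one (_ * _), ← hA.sum_eigenOverlap hB i, Finset.mul_sum, ← Finset.sum_sub_distrib]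
  refine Finset.sum_congr rfl fun j _ => ?_
  have hsupp := hA.nussbaumSzkola_fst_eq_zero hB hker (i, j)
  dsimp only [nussbaumSzkola] at hsupp ⊢
  rw [mul_mul_logb_mul_sub_logb_mul hsupp]
  ring

end IsHermitian

namespace PosSemidef

variable {A B : Matrix n n ℂ}

lemma nussbaumSzkola_fst_nonneg (hA : A.PosSemidef) (hB : B.IsHermitian) (x : n × n) :
    0 ≤ (hA.1.nussbaumSzkola hB).1 x :=
  mul_nonneg (hA.eigenvalues_nonneg _) (hA.1.eigenOverlap_nonneg hB _ _)

lemma nussbaumSzkola_snd_nonneg (hB : B.PosSemidef) (hA : A.IsHermitian) (x : n × n) :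
    0 ≤ (hA.nussbaumSzkola hB.1).2 x :=
  mul_nonneg (hB.eigenvalues_nonneg _) (hA.eigenOverlap_nonneg hB.1 _ _)

lemma re_trace_sqrt_mul_sqrt (hA : A.PosSemidef) (hB : B.PosSemidef) :
    (hA.sqrt * hB.sqrt).trace.re =
      ∑ x, √((hA.1.nussbaumSzkola hB.1).1 x * (hA.1.nussbaumSzkola hB.1).2 x) := by
  rw [show hA.sqrt * hB.sqrt = hA.1.cfc Real.sqrt * hB.1.cfc Real.sqrt from rfl,
    IsHermitian.trace_cfc_mul_cfc, Complex.ofReal_re, Fintype.sum_prod_type]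
  refine Finset.sum_congr rfl fun i _ => Finset.sum_congr rfl fun j _ => ?_
  have hO := hA.1.eigenOverlap_nonneg hB.1 i j
  dsimp only [IsHermitian.nussbaumSzkola]
  rw [mul_mul_mul_comm,
    Real.sqrt_mul (mul_nonneg (hA.eigenvalues_nonneg i) (hB.eigenvalues_nonneg j)),
    Real.sqrt_mul_self hO, Real.sqrt_mul (hA.eigenvalues_nonneg i)]

end PosSemidef

lemma re_trace_le_re_trace_sqrt {B M : Matrix n n ℂ} (hM : M.PosSemidef)
    (hBM : star B * B = M) : B.trace.re ≤ hM.sqrt.trace.re := by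
  subst hBM
  set U : Matrix n n ℂ := ↑hM.1.eigenvectorUnitary
  have hUU : U * star U = 1 := Unitary.mul_star_self_of_mem hM.1.eigenvectorUnitary.2
  set C := star U * B * U
  have hC : star C * C = diagonal (RCLike.ofReal ∘ hM.1.eigenvalues) := by
    rw [← hM.1.conjStarAlgAut_star_eigenvectorUnitary, Unitary.conjStarAlgAut_star_apply]
    simp only [C, star_mul, star_star, Matrix.mul_assoc]
    rw [← Matrix.mul_assoc U, hUU, Matrix.one_mul]
  have htrace : C.trace = B.trace := by
    rw [trace_mul_cycle, hUU, Matrix.one_mul]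
  rw [← htrace, show hM.sqrt = hM.1.cfc Real.sqrt from rfl, IsHermitian.trace_cfc, trace,
    Complex.re_sum, Complex.re_sum]
  refine Finset.sum_le_sum fun k _ => ?_
  calc (C k k).re ≤ ‖C k k‖ := Complex.re_le_norm _
    _ = √(Complex.normSq (C k k)) := Complex.norm_def _
    _ ≤ √((star C * C) k k).re :=
        Real.sqrt_le_sqrt (normSq_apply_self_le_re_star_mul_self_apply C k)
    _ = _ := by simp [hC]

end Matrix

theorem stmt5_general {n : Type*} [Fintype n] [DecidableEq n]
    (ρ σ : Matrix n n ℂ)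
    (hρ : ρ.PosSemidef) (hσ : σ.PosSemidef)
    (hρ1 : ρ.trace = 1)
    (hsupp : ∀ v : n → ℂ, σ *ᵥ v = 0 → ρ *ᵥ v = 0)
    (hM : (hσ.sqrt * ρ * hσ.sqrt).PosSemidef) :
    -2 * Real.logb 2 ((hM.sqrt.trace).re) ≤
      ((ρ * (matLog2 hρ.1 - matLog2 hσ.1)).trace).re := by
  have hP := hρ.nussbaumSzkola_fst_nonneg hσ.1
  have hQ := hσ.nussbaumSzkola_snd_nonneg hρ.1
  have hP1 : ∑ x, (hρ.1.nussbaumSzkola hσ.1).1 x = 1 := by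
    rw [hρ.1.sum_nussbaumSzkola_fst, hρ1, Complex.one_re]
  have hPQ := hρ.1.nussbaumSzkola_fst_eq_zero hσ.1 hsupp
  have hfid : (hρ.sqrt * hσ.sqrt).trace.re ≤ hM.sqrt.trace.re := by
    refine re_trace_le_re_trace_sqrt hM ?_
    rw [star_mul, star_eq_conjTranspose, star_eq_conjTranspose, hρ.isHermitian_sqrt.eq,
      hσ.isHermitian_sqrt.eq, Matrix.mul_assoc, ← Matrix.mul_assoc hρ.sqrt, hρ.sqrt_mul_sqrt,
      Matrix.mul_assoc]
  have hpos : 0 < (hρ.sqrt * hσ.sqrt).trace.re := by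
    rw [hρ.re_trace_sqrt_mul_sqrt]
    exact sum_sqrt_mul_pos hP hP1 hQ hPQ
  rw [hρ.1.re_trace_mul_sub_matLog2 hσ.1 hsupp]
  calc -2 * Real.logb 2 hM.sqrt.trace.re ≤ -2 * Real.logb 2 (hρ.sqrt * hσ.sqrt).trace.re :=
        mul_le_mul_of_nonpos_left (Real.logb_le_logb_of_le one_lt_two hpos hfid) (by norm_num)
    _ ≤ _ := by
        rw [hρ.re_trace_sqrt_mul_sqrt]
        exact neg_two_mul_logb_sum_sqrt_mul_le one_lt_two hP hP1 hQ hPQ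

/-- For density matrices `ρ, σ` with `supp ρ ⊆ supp σ` (expressed as `ker σ ⊆ ker ρ`),
`-2 log₂ F(ρ,σ) ≤ D(ρ‖σ)` where `F(ρ,σ) = tr √(σ^{1/2} ρ σ^{1/2})` is the fidelity and
`D(ρ‖σ) = tr(ρ (log₂ ρ - log₂ σ))` is the quantum relative entropy. -/
theorem stmt5 {n : Type*} [Fintype n] [DecidableEq n]
    (ρ σ : Matrix n n ℂ)
    (hρ : ρ.PosSemidef) (hσ : σ.PosSemidef)
    (hρ1 : ρ.trace = 1) (hσ1 : σ.trace = 1)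
    (hsupp : ∀ v : n → ℂ, σ *ᵥ v = 0 → ρ *ᵥ v = 0)
    (hM : (hσ.sqrt * ρ * hσ.sqrt).PosSemidef) :
    -2 * Real.logb 2 ((hM.sqrt.trace).re) ≤
      ((ρ * (matLog2 hρ.1 - matLog2 hσ.1)).trace).re :=
  stmt5_general ρ σ hρ hσ hρ1 hsupp hM
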